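/- Let p be a prime, B(x) ∈ M_n(𝔽_p(x)) with Δ(F) = F' + B·F satisfying Δ^p = 0. Then the map P: 𝔽_p(x)^n → 𝔽_p(x)^n defined by P(F) = Σ_{k=0}^{p−1} (−1)^k·(x^k/k!)·Δ^k(F) takes values in ker Δ, and every F ∈ 𝔽_p(x)^n satisfies F = Σ_{k=0}^{p−1} (x^k/k!)·P(Δ^k(F)). -/

import Mathlib

/-!
Leibniz's rule `Δ (a • G) = a' • G + a • Δ G` together with
`((-x)^(k+1)/(k+1)!)' = -(-x)^k/k!` (valid while `(k+1)!` is invertible, i.e. `k + 1 < p`) makes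
`Δ (P F)` telescope to a multiple of `Δ^p F = 0`. For the reconstruction, expand `P (Δ^k F)` and
collect the terms in `Δ^s F`: those with `s ≥ p` vanish, and for `s < p` the coefficient
`∑_{i+j=s} x^i/i! · (-x)^j/j! = (x - x)^s/s!` is zero unless `s = 0`.
-/

open Polynomial

/-- Formal derivative of a rational function, via the quotient rule on the
canonical numerator/denominator representation. -/
noncomputable def rderiv {F : Type*} [Field F] (f : RatFunc F) : RatFunc F :=
  algebraMap (Polynomial F) (RatFunc F)
      (Polynomial.derivative f.num * f.denom - f.num * Polynomial.derivative f.denom) /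
    algebraMap (Polynomial F) (RatFunc F) (f.denom ^ 2)

open Finset
open scoped Nat

section rderiv

variable {F : Type*} [Field F]

local notation "ι" => algebraMap F[X] (RatFunc F)

theorem rderiv_div (a b : F[X]) (hb : b ≠ 0) :
    rderiv (ι a / ι b) = ι (derivative a * b - a * derivative b) / ι (b ^ 2) := by
  set f := ι a / ι b
  have hfd : f.denom ≠ 0 := f.denom_ne_zero
  have hcross : a * f.denom = f.num * b := by
    have h := f.num_div_denom
    rw [div_eq_div_iff (RatFunc.algebraMap_ne_zero hfd) (RatFunc.algebraMap_ne_zero hb),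
      ← map_mul, ← map_mul] at h
    exact RatFunc.algebraMap_injective F h.symm
  have hcross' := congrArg derivative hcross
  simp only [derivative_mul] at hcross'
  rw [rderiv, div_eq_div_iff (RatFunc.algebraMap_ne_zero (pow_ne_zero 2 hfd))
    (RatFunc.algebraMap_ne_zero (pow_ne_zero 2 hb)), ← map_mul, ← map_mul]
  congr 1
  linear_combination (derivative f.denom * b + derivative b * f.denom) * hcross -
    (f.denom * b) * hcross'

theorem rderiv_algebraMap (a : F[X]) : rderiv (ι a) = ι (derivative a) := by
  simpa using rderiv_div a 1 one_ne_zero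

theorem rderiv_add (f g : RatFunc F) : rderiv (f + g) = rderiv f + rderiv g := by
  have hf := RatFunc.algebraMap_ne_zero f.denom_ne_zero
  have hg := RatFunc.algebraMap_ne_zero g.denom_ne_zero
  rw [← f.num_div_denom, ← g.num_div_denom, div_add_div _ _ hf hg, ← map_mul, ← map_mul,
    ← map_mul, ← map_add, rderiv_div _ _ (mul_ne_zero f.denom_ne_zero g.denom_ne_zero),
    rderiv_div _ _ f.denom_ne_zero, rderiv_div _ _ g.denom_ne_zero]
  simp only [derivative_mul, map_add, map_mul, map_sub, map_pow]
  field_simp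
  ring

theorem rderiv_mul (f g : RatFunc F) : rderiv (f * g) = rderiv f * g + f * rderiv g := by
  have hf := RatFunc.algebraMap_ne_zero f.denom_ne_zero
  have hg := RatFunc.algebraMap_ne_zero g.denom_ne_zero
  rw [← f.num_div_denom, ← g.num_div_denom, div_mul_div_comm, ← map_mul, ← map_mul,
    rderiv_div _ _ (mul_ne_zero f.denom_ne_zero g.denom_ne_zero),
    rderiv_div _ _ f.denom_ne_zero, rderiv_div _ _ g.denom_ne_zero]
  simp only [derivative_mul, map_add, map_mul, map_sub, map_pow]
  field_simp
  ring

theorem rderiv_X : rderiv (RatFunc.X : RatFunc F) = 1 := by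
  rw [← RatFunc.algebraMap_X, rderiv_algebraMap, derivative_X, map_one]

variable (F) in
noncomputable def rderivDerivation : Derivation F (RatFunc F) (RatFunc F) :=
  Derivation.mk'
    { toFun := rderiv
      map_add' := rderiv_add
      map_smul' := fun c f => by
        rw [Algebra.smul_def, rderiv_mul, IsScalarTower.algebraMap_apply F F[X] (RatFunc F),
          rderiv_algebraMap, Polynomial.algebraMap_apply, derivative_C, map_zero, zero_mul,
          zero_add, RingHom.id_apply, ← Polynomial.algebraMap_apply,
          ← IsScalarTower.algebraMap_apply, Algebra.smul_def] }
    fun f g => by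
      simp only [LinearMap.coe_mk, AddHom.coe_mk, rderiv_mul, smul_eq_mul]
      ring

end rderiv

theorem Finset.sum_range_sum_range_eq_sum_antidiagonal {M : Type*} [AddCommMonoid M] {N : ℕ}
    (f : ℕ → ℕ → M) (hf : ∀ i j, N ≤ i + j → f i j = 0) :
    ∑ i ∈ range N, ∑ j ∈ range N, f i j = ∑ s ∈ range N, ∑ ij ∈ antidiagonal s, f ij.1 ij.2 := by
  simp_rw [Nat.sum_antidiagonal_eq_sum_range_succ f, sum_range_diag_flip]
  refine sum_congr rfl fun i _ => (sum_subset (range_subset_range.2 (N.sub_le i)) ?_).symm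
  intro j hj hj'
  simp only [mem_range] at hj hj'
  exact hf i j (by omega)

section DividedPowers

variable {K : Type*} [Field K]

theorem sum_antidiagonal_pow_div_factorial_mul (x y : K) {s : ℕ} (hs : (s ! : K) ≠ 0) :
    ∑ ij ∈ antidiagonal s, x ^ ij.1 / ij.1 ! * (y ^ ij.2 / ij.2 !) = (x + y) ^ s / s ! := by
  rw [(Commute.all x y).add_pow', sum_div]
  refine sum_congr rfl fun ⟨i, j⟩ hij => ?_
  rw [HasAntidiagonal.mem_antidiagonal] at hij
  subst hij
  dsimp only
  have hchoose : ((i + j).choose i * i ! * j ! : K) = (i + j)! := by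
    rw [← Nat.cast_mul, ← Nat.cast_mul, Nat.choose_symm_add,
      Nat.add_choose_mul_factorial_mul_factorial]
  have hij : ((i + j).choose i * i ! * j ! : K) ≠ 0 := hchoose ▸ hs
  have hc : ((i + j).choose i : K) ≠ 0 := left_ne_zero_of_mul (left_ne_zero_of_mul hij)
  have hi : (i ! : K) ≠ 0 := right_ne_zero_of_mul (left_ne_zero_of_mul hij)
  have hj : (j ! : K) ≠ 0 := right_ne_zero_of_mul hij
  rw [nsmul_eq_mul, ← hchoose]
  field_simp

theorem Derivation.map_pow_succ_div_factorial {R : Type*} [CommRing R] [Algebra R K]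
    (D : Derivation R K K) (x : K) {k : ℕ} (hk : ((k + 1)! : K) ≠ 0) :
    D (x ^ (k + 1) / (k + 1)!) = D x * (x ^ k / k !) := by
  rw [div_eq_mul_inv, D.leibniz, D.leibniz_inv, D.map_natCast, smul_zero, smul_zero, zero_add,
    D.leibniz_pow, Nat.add_sub_cancel, smul_eq_mul, smul_eq_mul, nsmul_eq_mul]
  rw [Nat.factorial_succ, Nat.cast_mul] at hk ⊢
  have hk1 : ((k + 1 : ℕ) : K) ≠ 0 := left_ne_zero_of_mul hk
  have hk2 : (k ! : K) ≠ 0 := right_ne_zero_of_mul hk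
  field_simp

end DividedPowers

section Projector

variable {K M : Type*} [Field K] [AddCommGroup M] [Module K M]

def projector (Δ : M → M) (x : K) (N : ℕ) (m : M) : M :=
  ∑ k ∈ range N, ((-x) ^ k / k !) • Δ^[k] m

theorem map_projector_eq_zero {R : Type*} [CommRing R] [Algebra R K] {D : Derivation R K K}
    {Δ : M →+ M} (hΔ : ∀ (a : K) (m : M), Δ (a • m) = D a • m + a • Δ m)
    {x : K} (hx : D x = 1) {N : ℕ} (hN : ∀ m, Δ^[N] m = 0) (hfact : ∀ k < N, (k ! : K) ≠ 0)
    (m : M) : Δ (projector Δ x N m) = 0 := by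
  obtain _ | N := N
  · simp [projector]
  have hcoeff : ∀ k < N, D ((-x) ^ (k + 1) / (k + 1)!) = -((-x) ^ k / k !) := fun k hk => by
    rw [D.map_pow_succ_div_factorial _ (hfact _ (by omega)), D.map_neg, hx, neg_one_mul]
  have hterm : ∀ (a : K) k, Δ (a • Δ^[k] m) = D a • Δ^[k] m + a • Δ^[k + 1] m := fun a k => by
    rw [hΔ, Function.iterate_succ_apply']
  rw [projector, map_sum, sum_congr rfl fun k _ => hterm _ k, sum_add_distrib, sum_range_succ',
    sum_range_succ _ N, hN, smul_zero, add_zero,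
    sum_congr rfl fun k hk => congrArg (· • Δ^[k + 1] m) (hcoeff k (mem_range.1 hk))]
  simp [neg_smul]

theorem sum_pow_div_factorial_smul_projector_iterate {Δ : M → M} {N : ℕ}
    (hN : ∀ m, Δ^[N] m = 0) (hfact : ∀ k < N, (k ! : K) ≠ 0) (x : K) (m : M) :
    ∑ k ∈ range N, (x ^ k / k !) • projector Δ x N (Δ^[k] m) = m := by
  calc ∑ k ∈ range N, (x ^ k / k !) • projector Δ x N (Δ^[k] m)
      = ∑ i ∈ range N, ∑ j ∈ range N, (x ^ i / i ! * ((-x) ^ j / j !)) • Δ^[i + j] m := by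
        simp only [projector, smul_sum, smul_smul, ← Function.iterate_add_apply, add_comm]
    _ = ∑ s ∈ range N, ∑ ij ∈ antidiagonal s,
          (x ^ ij.1 / ij.1 ! * ((-x) ^ ij.2 / ij.2 !)) • Δ^[ij.1 + ij.2] m := by
        refine sum_range_sum_range_eq_sum_antidiagonal _ fun i j hij => ?_
        rw [← Nat.add_sub_cancel' hij, Function.iterate_add_apply, hN, smul_zero]
    _ = ∑ s ∈ range N, ((x + -x) ^ s / s !) • Δ^[s] m := by
        refine sum_congr rfl fun s hs => ?_
        rw [← sum_antidiagonal_pow_div_factorial_mul _ _ (hfact s (mem_range.1 hs)), sum_smul]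
        exact sum_congr rfl fun ij hij => by rw [HasAntidiagonal.mem_antidiagonal.1 hij]
    _ = m := by
        obtain _ | N := N
        · simpa using (hN m).symm
        simp [sum_range_succ']

end Projector

theorem Derivation.leibniz_smul_add_mulVec {R K ι : Type*} [CommRing R] [Field K] [Algebra R K]
    [Fintype ι] (D : Derivation R K K) (B : Matrix ι ι K) (a : K) (F : ι → K) :
    (fun j => D (a * F j)) + B.mulVec (a • F) =
      D a • F + a • ((fun j => D (F j)) + B.mulVec F) := by
  ext j
  simp only [Pi.add_apply, Pi.smul_apply, smul_eq_mul, Matrix.mulVec_smul, D.leibniz]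
  ring

/-- Let `p` be a prime and `B(x) ∈ Mₙ(𝔽_p(x))` with `Δ : F ↦ F' + B·F` of vanishing
`p`-curvature (`Δ^p = 0`).  Then `P : F ↦ ∑_{k=0}^{p−1} (−1)^k (x^k/k!) Δ^k(F)` takes
values in `ker Δ`, and every `F` satisfies `F = ∑_{k=0}^{p−1} (x^k/k!)·P(Δ^k(F))`. -/
theorem projector_onto_solutions (p : ℕ) [Fact p.Prime] (n : ℕ)
    (B : Matrix (Fin n) (Fin n) (RatFunc (ZMod p)))
    (Δ : (Fin n → RatFunc (ZMod p)) → (Fin n → RatFunc (ZMod p)))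
    (hΔ : ∀ F, Δ F = (fun j => rderiv (F j)) + B.mulVec F)
    (hp : ∀ F, Δ^[p] F = 0)
    (P : (Fin n → RatFunc (ZMod p)) → (Fin n → RatFunc (ZMod p)))
    (hP : ∀ F, P F = ∑ k ∈ Finset.range p,
      ((-1 : RatFunc (ZMod p)) ^ k * RatFunc.X ^ k / (k.factorial : RatFunc (ZMod p)))
        • Δ^[k] F) :
    (∀ F, Δ (P F) = 0) ∧
      ∀ F : Fin n → RatFunc (ZMod p),
        F = ∑ k ∈ Finset.range p,
          (RatFunc.X ^ k / (k.factorial : RatFunc (ZMod p))) • P (Δ^[k] F) := by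
  have hfact : ∀ k < p, (k ! : RatFunc (ZMod p)) ≠ 0 := fun k hk =>
    ((IsUnit.natCast_factorial_iff_of_charP p).2 hk).ne_zero
  have hP' : P = projector Δ RatFunc.X p := funext fun F =>
    (hP F).trans (sum_congr rfl fun k _ => by rw [← neg_pow])
  subst hP'
  let ΔA : (Fin n → RatFunc (ZMod p)) →+ (Fin n → RatFunc (ZMod p)) :=
    AddMonoidHom.mk' Δ fun F G => by
      rw [hΔ, hΔ, hΔ]
      ext j
      simp only [Pi.add_apply, rderiv_add, Matrix.mulVec_add]
      ring
  have hLeibniz : ∀ (a : RatFunc (ZMod p)) F,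
      ΔA (a • F) = rderivDerivation (ZMod p) a • F + a • ΔA F := fun a F => by
    change Δ (a • F) = rderiv a • F + a • Δ F
    rw [hΔ, hΔ]
    exact (rderivDerivation (ZMod p)).leibniz_smul_add_mulVec B a F
  exact ⟨map_projector_eq_zero hLeibniz rderiv_X hp hfact,
    fun F => (sum_pow_div_factorial_smul_projector_iterate hp hfact _ F).symm⟩
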